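/- Let r ∈ Ω^1(M,TM) and let 𝒟^{r,T} = (D^{r,T}, r, r) be the generalized derivation of degree 1 on TM with D^{r,T}_X(Y) = [Y, r(X)] − r([Y,X]). Then [𝒟^{r,T}, 𝒟^{r,T}] = 𝒟^{[r,r],T}, where [r,r] is the Frölicher–Nijenhuis bracket (twice the Nijenhuis torsion of r). In particular [𝒟^{r,T}, 𝒟^{r,T}] = 0 if and only if the Nijenhuis torsion of r vanishes. -/
import Mathlib


/-- Vector fields on `M`, modeled as derivations of `R = C^∞(M)`. -/
abbrev VectorField (R : Type*) [CommRing R] [Algebra ℝ R] := Derivation ℝ R R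

variable {R : Type*} [CommRing R] [Algebra ℝ R]

/-- Frölicher–Nijenhuis bracket `[r₁, r₂]` of two (1,1)-tensors (a vector-valued 2-form);
for `r₁ = r₂ = r` it equals twice the Nijenhuis torsion of `r`. -/
def fnBracket (r₁ r₂ : VectorField R → VectorField R) (X Y : VectorField R) : VectorField R :=
  ⁅r₁ X, r₂ Y⁆ + ⁅r₂ X, r₁ Y⁆ - r₁ ⁅r₂ X, Y⁆ - r₁ ⁅X, r₂ Y⁆ - r₂ ⁅r₁ X, Y⁆ - r₂ ⁅X, r₁ Y⁆
    + r₁ (r₂ ⁅X, Y⁆) + r₂ (r₁ ⁅X, Y⁆)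

/-- Extension of a degree-1 generalized derivation `(D, l, r)` to 1-forms. -/
def Dext {F : Type*} [AddCommGroup F] (D : VectorField R → F → F) (l : F → F)
    (r : VectorField R → VectorField R) (η : VectorField R → F) (X Y : VectorField R) : F :=
  - D X (η Y) + D Y (η X) + l (η ⁅X, Y⁆) - η ⁅r X, Y⁆ - η ⁅X, r Y⁆ + η (r ⁅X, Y⁆)

/-- `D^{r,T}_X(u) = [u, r](X) = [u, r(X)] − r([u, X])`. -/
def DrT (r : VectorField R →ₗ[R] VectorField R) (X u : VectorField R) : VectorField R :=
  ⁅u, r X⁆ - r ⁅u, X⁆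

/-- The Nijenhuis torsion of `r`. -/
def nijenhuis (r : VectorField R →ₗ[R] VectorField R) (X Y : VectorField R) : VectorField R :=
  ⁅r X, r Y⁆ - r ⁅r X, Y⁆ - r ⁅X, r Y⁆ + r (r ⁅X, Y⁆)

/-- The D-component identity: `2 D^{r,T}∘D^{r,T} = D^{[r,r],T}`. -/
theorem Dcomp_eq (r : VectorField R →ₗ[R] VectorField R) (X Y u : VectorField R) :
      Dext (DrT r) ⇑r ⇑r (fun Z => DrT r Z u) X Y
          + Dext (DrT r) ⇑r ⇑r (fun Z => DrT r Z u) X Y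
        = ⁅u, fnBracket ⇑r ⇑r X Y⁆ - fnBracket ⇑r ⇑r ⁅u, X⁆ Y - fnBracket ⇑r ⇑r X ⁅u, Y⁆ := by
  have s1 : ⁅r Y, r X⁆ = -⁅r X, r Y⁆ := by rw [← lie_skew]
  have s2 : ⁅r ⁅u,Y⁆, r X⁆ = -⁅r X, r ⁅u,Y⁆⁆ := by rw [← lie_skew]
  have s3 : ⁅r ⁅u,Y⁆, X⁆ = -⁅X, r ⁅u,Y⁆⁆ := by rw [← lie_skew]
  have s4 : ⁅u, ⁅r X, r Y⁆⁆ = -⁅r Y, ⁅u, r X⁆⁆ + ⁅r X, ⁅u, r Y⁆⁆ := by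
    rw [leibniz_lie u (r X) (r Y), ← lie_skew ⁅u, r X⁆]
  have s5 : ⁅u, ⁅r Y, X⁆⁆ = -⁅X, ⁅u, r Y⁆⁆ + ⁅r Y, ⁅u, X⁆⁆ := by
    rw [leibniz_lie u (r Y) X, ← lie_skew ⁅u, r Y⁆]
  simp only [Dext, DrT, fnBracket, map_add, map_sub, lie_add, add_lie, lie_sub, sub_lie,
    lie_lie, s1, s2, s3, s4, s5, map_neg, lie_neg, neg_lie, neg_neg]
  abel

/-- The l-component identity: `2[D^{r,T}, r] = ˜[r,r]`. -/
theorem lcomp_eq (r : VectorField R →ₗ[R] VectorField R) (X u : VectorField R) :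
      (DrT r X (r u) - r (DrT r X u)) + (DrT r X (r u) - r (DrT r X u))
        = fnBracket ⇑r ⇑r u X := by
  simp only [DrT, fnBracket, map_sub]
  abel

/-- `fnBracket r r = 2 nijenhuis r`. -/
theorem fnBracket_eq_two_nijenhuis (r : VectorField R →ₗ[R] VectorField R)
    (X Y : VectorField R) :
    fnBracket ⇑r ⇑r X Y = nijenhuis r X Y + nijenhuis r X Y := by
  simp only [fnBracket, nijenhuis, ← lie_skew (r Y) (r X)]
  abel

/-- for `r ∈ Ω^1(M,TM)` with associated generalized derivation
`𝒟^{r,T} = (D^{r,T}, r, r)`, one has `[𝒟^{r,T}, 𝒟^{r,T}] = 𝒟^{[r,r],T}`, componentwise: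
the `D`-component `2 D^{r,T}∘D^{r,T}` equals `D^{[r,r],T}(u) = [u,[r,r]]`, and the
`l`-component `2[D^{r,T}, r]` equals the symbol `˜[r,r]`.  In particular
`[𝒟^{r,T}, 𝒟^{r,T}] = 0` if and only if the Nijenhuis torsion of `r` vanishes. -/
theorem bracket_DrT_self (r : VectorField R →ₗ[R] VectorField R) :
    -- D-component of [𝒟^{r,T},𝒟^{r,T}] equals D-component of 𝒟^{[r,r],T}
    (∀ X Y u : VectorField R,
      Dext (DrT r) ⇑r ⇑r (fun Z => DrT r Z u) X Y
          + Dext (DrT r) ⇑r ⇑r (fun Z => DrT r Z u) X Y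
        = ⁅u, fnBracket ⇑r ⇑r X Y⁆ - fnBracket ⇑r ⇑r ⁅u, X⁆ Y - fnBracket ⇑r ⇑r X ⁅u, Y⁆) ∧
    -- l-component of [𝒟^{r,T},𝒟^{r,T}] equals the symbol of [r,r]
    (∀ X u : VectorField R,
      (DrT r X (r u) - r (DrT r X u)) + (DrT r X (r u) - r (DrT r X u))
        = fnBracket ⇑r ⇑r u X) ∧
    -- [𝒟^{r,T},𝒟^{r,T}] = 0 iff N_r = 0
    (((∀ X Y u : VectorField R,
        Dext (DrT r) ⇑r ⇑r (fun Z => DrT r Z u) X Y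
          + Dext (DrT r) ⇑r ⇑r (fun Z => DrT r Z u) X Y = 0) ∧
      (∀ X u : VectorField R,
        (DrT r X (r u) - r (DrT r X u)) + (DrT r X (r u) - r (DrT r X u)) = 0) ∧
      (∀ X Y : VectorField R, fnBracket ⇑r ⇑r X Y = 0))
      ↔ (∀ X Y : VectorField R, nijenhuis r X Y = 0)) := by
  refine ⟨Dcomp_eq r, lcomp_eq r, ?_, ?_⟩
  · rintro ⟨-, -, h3⟩ X Y
    have h := h3 X Y
    rw [fnBracket_eq_two_nijenhuis] at h
    have := congrArg (fun z => (2 : ℝ)⁻¹ • z) h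
    simpa [smul_add, ← two_smul ℝ (nijenhuis r X Y), smul_smul] using this
  · intro hN
    have hfn : ∀ X Y : VectorField R, fnBracket ⇑r ⇑r X Y = 0 := fun X Y => by
      rw [fnBracket_eq_two_nijenhuis, hN, add_zero]
    exact ⟨fun X Y u => by rw [Dcomp_eq, hfn, hfn, hfn]; simp,
      fun X u => by rw [lcomp_eq, hfn], hfn⟩
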